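/- arXiv:math/0505125 — 4 statements merged into one kernel-verified Lean document; each statement's English description precedes it below -/
import Mathlib

section
/- For every positive integer m, lim_{x→m} ( π·cot(πx)/(e^{2πx}−1) + 2m/((e^{2πm}−1)(m²−x²)) ) = 1/(2m(e^{2πm}−1)) − π/(2 sinh²(πm)). -/
/-!
Put `g x = (exp (2πx) - 1)⁻¹`. Since `2m / (m² - x²) = 1/(x + m) - 1/(x - m)`, the expression is
`(π cot (πx) g x - g m / (x - m)) + g m / (x + m)`. The cotangent has residue `1` at the integer
`m`, i.e. `π cot (πx) - 1/(x - m) → 0`, so the bracket tends to `g' m = -π / (2 sinh² (πm))`, while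
the last term tends to `g m / (2m)`.
-/

open Real Filter Topology

theorem Real.cot_add_int_mul_pi (x : ℝ) (n : ℤ) : cot (x + n * π) = cot x := by
  rw [cot_eq_cos_div_sin, cot_eq_cos_div_sin, sin_add_int_mul_pi, cos_add_int_mul_pi]
  exact mul_div_mul_left _ _ (zpow_ne_zero _ (by norm_num))

theorem tendsto_sin_div_self : Tendsto (fun t => sin t / t) (𝓝[≠] 0) (𝓝 1) := by
  have h := hasDerivAt_iff_tendsto_slope.mp (hasDerivAt_sin 0)
  rw [cos_zero] at h
  refine h.congr fun t => ?_
  simp [slope_def_field]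

theorem tendsto_mul_cos_sub_sin_div_sq :
    Tendsto (fun t => (t * cos t - sin t) / t ^ 2) (𝓝[≠] 0) (𝓝 0) := by
  have hf (t : ℝ) : HasDerivAt (fun t => t * cos t - sin t) (-(t * sin t)) t := by
    refine (((hasDerivAt_id' t).mul (hasDerivAt_cos t)).sub (hasDerivAt_sin t)).congr_deriv ?_
    ring
  have hg (t : ℝ) : HasDerivAt (fun t => t ^ 2) (2 * t) t := by
    simpa using hasDerivAt_pow 2 t
  refine HasDerivAt.lhopital_zero_nhdsNE (.of_forall hf) (.of_forall hg) ?_ ?_ ?_ ?_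
  · filter_upwards [self_mem_nhdsWithin] with t ht using mul_ne_zero two_ne_zero ht
  · exact ((by fun_prop : Continuous fun t => t * cos t - sin t).tendsto' 0 0
      (by simp)).mono_left nhdsWithin_le_nhds
  · exact ((continuous_pow 2).tendsto' 0 0 (by simp)).mono_left nhdsWithin_le_nhds
  · have h : Tendsto (fun t => -sin t / 2) (𝓝[≠] 0) (𝓝 0) :=
      ((by fun_prop : Continuous fun t => -sin t / 2).tendsto' 0 0 (by simp)).mono_left
        nhdsWithin_le_nhds
    refine h.congr' ?_
    filter_upwards [self_mem_nhdsWithin] with t (ht : t ≠ 0)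
    field_simp

theorem tendsto_cot_sub_inv : Tendsto (fun t => cot t - t⁻¹) (𝓝[≠] 0) (𝓝 0) := by
  have h := tendsto_mul_cos_sub_sin_div_sq.div tendsto_sin_div_self one_ne_zero
  rw [zero_div] at h
  refine h.congr' ?_
  filter_upwards [self_mem_nhdsWithin, tendsto_sin_div_self.eventually_ne one_ne_zero]
    with t (ht : t ≠ 0) hsin_div
  have hsin : sin t ≠ 0 := left_ne_zero_of_mul hsin_div
  simp only [Pi.div_apply, cot_eq_cos_div_sin]
  field_simp

theorem tendsto_pi_mul_cot_sub_inv_sub_int (n : ℤ) :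
    Tendsto (fun x => π * cot (π * x) - (x - n)⁻¹) (𝓝[≠] (n : ℝ)) (𝓝 0) := by
  have hshift : Tendsto (fun x => π * (x - n)) (𝓝[≠] (n : ℝ)) (𝓝[≠] 0) := by
    simpa using (((hasDerivAt_id (n : ℝ)).sub_const (n : ℝ)).const_mul π).tendsto_nhdsNE
      (by simp [pi_ne_zero])
  have h := (tendsto_cot_sub_inv.comp hshift).const_mul π
  rw [mul_zero] at h
  refine h.congr fun x => ?_
  have hx : π * x = π * (x - n) + n * π := by ring
  rw [Function.comp_apply, hx, cot_add_int_mul_pi, mul_sub, mul_inv, ← mul_assoc,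
    mul_inv_cancel₀ pi_ne_zero, one_mul]

theorem tendsto_mul_sub_div_sub_of_hasDerivAt {𝕜 : Type*} [NontriviallyNormedField 𝕜]
    {f g : 𝕜 → 𝕜} {a g' : 𝕜} (hf : Tendsto (fun x => f x - (x - a)⁻¹) (𝓝[≠] a) (𝓝 0))
    (hg : HasDerivAt g g' a) :
    Tendsto (fun x => f x * g x - g a / (x - a)) (𝓝[≠] a) (𝓝 g') := by
  have h := (hf.mul (hg.continuousAt.tendsto.mono_left nhdsWithin_le_nhds)).add
    (hasDerivAt_iff_tendsto_slope.mp hg)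
  rw [zero_mul, zero_add] at h
  refine h.congr fun x => ?_
  rw [slope_def_field]
  ring

theorem Real.exp_two_mul_sub_one (y : ℝ) : exp (2 * y) - 1 = 2 * exp y * sinh y := by
  rw [sinh_eq, exp_neg, two_mul, exp_add]
  field_simp

theorem hasDerivAt_inv_exp_two_pi_mul_sub_one {y : ℝ} (hy : y ≠ 0) :
    HasDerivAt (fun x => (exp (2 * π * x) - 1)⁻¹) (-π / (2 * sinh (π * y) ^ 2)) y := by
  have hE : exp (2 * π * y) - 1 ≠ 0 := by
    simp [sub_eq_zero, pi_ne_zero, hy]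
  have h := ((((hasDerivAt_id' y).const_mul (2 * π)).exp).sub_const 1).inv hE
  refine h.congr_deriv ?_
  have hs : sinh (π * y) ≠ 0 := by simp [pi_ne_zero, hy]
  rw [mul_assoc, exp_two_mul_sub_one]
  field_simp
  rw [sq, ← exp_add]
  ring_nf

theorem ramanujan_pole_cancellation (m : ℕ+) :
    Tendsto (fun x : ℝ => π * Real.cot (π * x) / (Real.exp (2 * π * x) - 1)
        + 2 * (m : ℝ) / ((Real.exp (2 * π * m) - 1) * ((m : ℝ) ^ 2 - x ^ 2)))
      (𝓝[≠] (m : ℝ))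
      (𝓝 (1 / (2 * m * (Real.exp (2 * π * m) - 1)) - π / (2 * Real.sinh (π * m) ^ 2))) := by
  have hm : (0 : ℝ) < m := by exact_mod_cast m.pos
  have hpole := tendsto_pi_mul_cot_sub_inv_sub_int (m : ℕ)
  rw [Int.cast_natCast] at hpole
  have hE : exp (2 * π * m) - 1 ≠ 0 := by simp [sub_eq_zero, pi_ne_zero, hm.ne']
  have hadd : Tendsto (fun x : ℝ => x + m) (𝓝[≠] (m : ℝ)) (𝓝 (m + m)) :=
    (tendsto_id.add tendsto_const_nhds).mono_left nhdsWithin_le_nhds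
  have hsum := (tendsto_mul_sub_div_sub_of_hasDerivAt hpole
    (hasDerivAt_inv_exp_two_pi_mul_sub_one hm.ne')).add
    ((tendsto_const_nhds (x := (exp (2 * π * m) - 1)⁻¹)).div hadd (by positivity))
  convert hsum.congr' ?_ using 2
  · field_simp
    ring
  filter_upwards [self_mem_nhdsWithin, hadd.eventually_ne (by positivity)]
    with x (hx : x ≠ m) hx_add
  have hx_sub : x - m ≠ 0 := sub_ne_zero.mpr hx
  have hsq : (m : ℝ) ^ 2 - x ^ 2 = -((x - m) * (x + m)) := by ring
  rw [hsq, Pi.div_apply]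
  field_simp
  ring
end

section
/- For real x > 0 and 0 < |x| < 1, Σ_{k≥1} 4kx/((e^{2πk}−1)(k²−x²)²) = 4·Σ_{n≥1} n·x^{2n−1}·Σ_{k≥1} k^{−2n−1}/(e^{2πk}−1), where the double series converges absolutely. -/
/-!
Expanding `k x / (k² - x²)²` as the derivative of the geometric series in `x² / k²` gives
`∑_{n ≥ 1} n x^(2n-1) / k^(2n+1)` for `|x| < k`. Weighting by `w k = 1 / (e^(2πk) - 1)`, the
terms of the double series are dominated by `n |x|^(2n-1) |w k|`, a product of two summable
sequences, so the order of summation may be swapped. Only the summability of `w` matters.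
-/

open Real

theorem hasSum_pnat_mul_pow_div_pow {x k : ℝ} (hxk : |x| < |k|) :
    HasSum (fun n : ℕ+ => (n : ℝ) * x ^ (2 * (n : ℕ) - 1) / k ^ (2 * (n : ℕ) + 1))
      (k * x / (k ^ 2 - x ^ 2) ^ 2) := by
  have hk : k ≠ 0 := abs_pos.1 ((abs_nonneg x).trans_lt hxk)
  have hsq : x ^ 2 < k ^ 2 := sq_lt_sq.2 hxk
  have hr : ‖x ^ 2 / k ^ 2‖ < 1 := by
    rw [Real.norm_eq_abs, abs_of_nonneg (by positivity), div_lt_one (by positivity)]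
    exact hsq
  have h := (hasSum_choose_mul_geometric_of_norm_lt_one 1 hr).mul_left (x / k ^ 3)
  refine (hasSum_pnat_iff_hasSum_succ
    (f := fun n : ℕ => (n : ℝ) * x ^ (2 * n - 1) / k ^ (2 * n + 1))).2 ?_
  have hval : k * x / (k ^ 2 - x ^ 2) ^ 2 = x / k ^ 3 * (1 / (1 - x ^ 2 / k ^ 2) ^ (1 + 1)) := by
    have : k ^ 2 - x ^ 2 ≠ 0 := by linarith
    rw [one_add_one_eq_two, one_sub_div (pow_ne_zero 2 hk), div_pow]
    field_simp
  rw [hval]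
  refine h.congr_fun fun n => ?_
  rw [show 2 * (n + 1) - 1 = 2 * n + 1 by omega]
  simp only [Nat.choose_one_right, Nat.cast_add, Nat.cast_one, div_pow]
  field_simp
  ring

section WeightedSeries

variable {w : ℕ+ → ℝ} {x : ℝ}

theorem summable_abs_mul_pow_mul_div_pow (hw : Summable w) (hx : |x| < 1) :
    Summable fun p : ℕ+ × ℕ+ =>
      |(p.1 : ℝ) * x ^ (2 * (p.1 : ℕ) - 1) * (w p.2 / (p.2 : ℝ) ^ (2 * (p.1 : ℕ) + 1))| := by
  have hpow : Summable fun n : ℕ+ => (n : ℝ) * |x| ^ (2 * (n : ℕ) - 1) := by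
    simpa using (hasSum_pnat_mul_pow_div_pow (x := |x|) (k := 1) (by simpa)).summable
  refine (hpow.mul_of_nonneg hw.abs (fun n => by positivity) (fun k => abs_nonneg _))
    |>.of_nonneg_of_le (fun p => abs_nonneg _) (fun ⟨n, k⟩ => ?_)
  have hk : (1 : ℝ) ≤ (k : ℝ) ^ (2 * (n : ℕ) + 1) := one_le_pow₀ (Nat.one_le_cast.2 k.pos)
  rw [abs_mul, abs_mul, abs_div, abs_of_pos (zero_lt_one.trans_le hk), abs_pow, Nat.abs_cast]
  gcongr
  exact div_le_self (abs_nonneg _) hk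

theorem tsum_mul_div_sq_sub_sq_eq_tsum_mul_tsum (hw : Summable w) (hx : |x| < 1) :
    ∑' k : ℕ+, (k : ℝ) * x * w k / ((k : ℝ) ^ 2 - x ^ 2) ^ 2
      = ∑' n : ℕ+, (n : ℝ) * x ^ (2 * (n : ℕ) - 1)
          * ∑' k : ℕ+, w k / (k : ℝ) ^ (2 * (n : ℕ) + 1) := by
  set T : ℕ+ → ℕ+ → ℝ := fun n k =>
    (n : ℝ) * x ^ (2 * (n : ℕ) - 1) * (w k / (k : ℝ) ^ (2 * (n : ℕ) + 1))
  have hT : Summable (Function.uncurry T) := (summable_abs_mul_pow_mul_div_pow hw hx).of_abs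
  have hfiber : ∀ k : ℕ+,
      HasSum (fun n => T n k) ((k : ℝ) * x * w k / ((k : ℝ) ^ 2 - x ^ 2) ^ 2) := by
    intro k
    have hxk : |x| < |(k : ℝ)| := by
      rw [Nat.abs_cast]; exact hx.trans_le (Nat.one_le_cast.2 k.pos)
    rw [show (k : ℝ) * x * w k / ((k : ℝ) ^ 2 - x ^ 2) ^ 2
        = w k * ((k : ℝ) * x / ((k : ℝ) ^ 2 - x ^ 2) ^ 2) by ring]
    exact ((hasSum_pnat_mul_pow_div_pow hxk).mul_left (w k)).congr_fun fun n => by ring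
  calc ∑' k : ℕ+, (k : ℝ) * x * w k / ((k : ℝ) ^ 2 - x ^ 2) ^ 2
      = ∑' (k : ℕ+) (n : ℕ+), T n k := tsum_congr fun k => (hfiber k).tsum_eq.symm
    _ = ∑' (n : ℕ+) (k : ℕ+), T n k :=
      hT.tsum_comm' hT.prod_factor fun k => (hfiber k).summable
    _ = _ := tsum_congr fun n => tsum_mul_left

end WeightedSeries

theorem summable_one_div_exp_mul_sub_one {c : ℝ} (hc : 0 < c) :
    Summable (fun k : ℕ+ => 1 / (exp (c * k) - 1)) := by
  set q := exp (-c)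
  have hq0 : 0 < q := exp_pos _
  have hq1 : q < 1 := exp_lt_one_iff.2 (neg_lt_zero.2 hc)
  have hgeom : Summable (fun k : ℕ+ => (1 - q)⁻¹ * q ^ (k : ℕ)) :=
    summable_pnat_iff_summable_nat.2 ((summable_geometric_of_lt_one hq0.le hq1).mul_left _)
  refine hgeom.of_nonneg_of_le (fun k => ?_) (fun k => ?_)
  · exact one_div_nonneg.2 (sub_nonneg.2 (one_le_exp (by positivity)))
  · have hqk : q ^ (k : ℕ) = (exp (c * k))⁻¹ := by
      rw [← exp_nat_mul, ← exp_neg]; ring_nf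
    have he : 1 < exp (c * k) := one_lt_exp_iff.2 (by positivity)
    have hle : (exp (c * k))⁻¹ ≤ q := hqk ▸ pow_le_of_le_one hq0.le hq1.le k.ne_zero
    have hinv : (exp (c * k))⁻¹ < 1 := inv_lt_one_of_one_lt₀ he
    calc 1 / (exp (c * k) - 1) = (exp (c * k))⁻¹ / (1 - (exp (c * k))⁻¹) := by
          field_simp
      _ ≤ (exp (c * k))⁻¹ / (1 - q) :=
          div_le_div_of_nonneg_left (by positivity) (by linarith) (by linarith)
      _ = (1 - q)⁻¹ * q ^ (k : ℕ) := by rw [hqk]; ring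

theorem ramanujan_double_series_exp (x : ℝ) (hx0 : 0 < x) (hx1 : x < 1) :
    Summable (fun p : ℕ+ × ℕ+ =>
        |4 * (p.1 : ℝ) * x ^ (2 * (p.1 : ℕ) - 1)
          / ((p.2 : ℝ) ^ (2 * (p.1 : ℕ) + 1) * (Real.exp (2 * π * p.2) - 1))|) ∧
    ∑' k : ℕ+, 4 * (k : ℝ) * x / ((Real.exp (2 * π * k) - 1) * ((k : ℝ) ^ 2 - x ^ 2) ^ 2)
      = 4 * ∑' n : ℕ+, (n : ℝ) * x ^ (2 * (n : ℕ) - 1)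
          * ∑' k : ℕ+, 1 / ((k : ℝ) ^ (2 * (n : ℕ) + 1) * (Real.exp (2 * π * k) - 1)) := by
  set w : ℕ+ → ℝ := fun k => 1 / (exp (2 * π * k) - 1)
  have hw : Summable w := summable_one_div_exp_mul_sub_one (by positivity)
  have hx : |x| < 1 := abs_lt.2 ⟨by linarith, hx1⟩
  refine ⟨((summable_abs_mul_pow_mul_div_pow hw hx).of_abs.mul_left 4).abs.congr fun p => ?_, ?_⟩
  · congr 1
    simp only [w, div_eq_mul_inv, mul_inv]
    ring
  · calc _ = 4 * ∑' k : ℕ+, (k : ℝ) * x * w k / ((k : ℝ) ^ 2 - x ^ 2) ^ 2 := by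
          rw [← tsum_mul_left]
          exact tsum_congr fun k => by simp only [w, div_eq_mul_inv, mul_inv]; ring
      _ = _ := by
          rw [tsum_mul_div_sq_sub_sq_eq_tsum_mul_tsum hw hx]
          congr 1
          refine tsum_congr fun n => ?_
          congr 1
          exact tsum_congr fun k => by simp only [w, div_eq_mul_inv, mul_inv]; ring
end

section
/- For x > 0 and k a positive integer, ∫_x^∞ log|2 sin(πv)|·(2πk)²·e^{−2πkv} dv = 2π·e^{−2πkx}·( k²·Σ_{n≥1} sin(2πnx)/(k²+n²) − k³·Σ_{n≥1} cos(2πnx)/(n(k²+n²)) ). -/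
/-!
Abel summation. For `0 ≤ r < 1` the expansion `log ‖1 - r e^{iθ}‖ = -∑ rⁿ cos (nθ) / n` is
dominated by a geometric series, so against the weight `(2πκ)² e^{-2πκv}` on `(x, ∞)` it integrates
termwise to `∑ rⁿ cₙ`, where `cₙ` comes from `∫ cos (av) e^{-bv} dv`. As `r → 1⁻`,
`‖1 - r e^{2πiv}‖ → |2 sin πv|`. On the right, `cₙ = O(1/n²)`, so `∑ rⁿ cₙ → ∑ cₙ`. On the left,
dominated convergence applies with majorant `(2 log 2 - log |2 sin πv|)` times the weight; that
majorant is integrable by Fatou's lemma, because `log 2 - log ‖1 - r e^{2πiv}‖ ≥ 0` and its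
weighted integrals `log 2 ∫ weight - ∑ rⁿ cₙ` stay bounded.
-/

open Real MeasureTheory Filter Set Topology

lemma norm_one_sub_ofReal_mul_exp_sq (r θ : ℝ) :
    ‖1 - (r : ℂ) * Complex.exp (θ * Complex.I)‖ ^ 2 = (1 - r) ^ 2 + 4 * r * sin (θ / 2) ^ 2 := by
  rw [Complex.sq_norm, Complex.normSq_apply]
  simp only [Complex.sub_re, Complex.sub_im, Complex.one_re, Complex.one_im, Complex.re_ofReal_mul,
    Complex.im_ofReal_mul, Complex.exp_ofReal_mul_I_re, Complex.exp_ofReal_mul_I_im]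
  have h : sin (θ / 2) ^ 2 = 1 / 2 - cos θ / 2 := by
    rw [sin_sq_eq_half_sub, mul_div_cancel₀ θ two_ne_zero]
  linear_combination r ^ 2 * sin_sq_add_cos_sq θ - 4 * r * h

lemma norm_one_sub_exp_ofReal_mul_I (θ : ℝ) :
    ‖1 - Complex.exp (θ * Complex.I)‖ = |2 * sin (θ / 2)| := by
  have h := norm_one_sub_ofReal_mul_exp_sq 1 θ
  rw [Complex.ofReal_one, one_mul] at h
  rw [← sq_eq_sq₀ (norm_nonneg _) (abs_nonneg _), h, sq_abs]
  ring

lemma norm_one_sub_ofReal_mul_le_two {r : ℝ} (h0 : 0 ≤ r) (h1 : r ≤ 1) {w : ℂ} (hw : ‖w‖ = 1) :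
    ‖1 - (r : ℂ) * w‖ ≤ 2 := by
  calc ‖1 - (r : ℂ) * w‖ ≤ ‖(1 : ℂ)‖ + ‖(r : ℂ) * w‖ := norm_sub_le _ _
    _ ≤ 2 := by rw [norm_one, norm_mul, hw, Complex.norm_real, norm_of_nonneg h0]; linarith

lemma log_norm_one_sub_ofReal_mul_le_log_two {r : ℝ} (h0 : 0 ≤ r) (h1 : r ≤ 1) {w : ℂ}
    (hw : ‖w‖ = 1) : log ‖1 - (r : ℂ) * w‖ ≤ log 2 := by
  rcases (norm_nonneg (1 - (r : ℂ) * w)).eq_or_lt with h | h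
  · rw [← h, log_zero]; positivity
  · exact log_le_log h (norm_one_sub_ofReal_mul_le_two h0 h1 hw)

lemma abs_log_norm_one_sub_ofReal_mul_le {r : ℝ} (h0 : 0 ≤ r) (h1 : r < 1) {w : ℂ}
    (hw : ‖w‖ = 1) : |log ‖1 - (r : ℂ) * w‖| ≤ log 2 - log (1 - r) := by
  have hlow : 1 - r ≤ ‖1 - (r : ℂ) * w‖ := by
    calc 1 - r = ‖(1 : ℂ)‖ - ‖(r : ℂ) * w‖ := by
          rw [norm_one, norm_mul, hw, Complex.norm_real, norm_of_nonneg h0, mul_one]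
      _ ≤ ‖1 - (r : ℂ) * w‖ := norm_sub_norm_le _ _
  have hr : 0 < 1 - r := by linarith
  have hup := log_norm_one_sub_ofReal_mul_le_log_two h0 h1.le hw
  have hdown := log_le_log hr hlow
  have hlog : log (1 - r) ≤ 0 := log_nonpos hr.le (by linarith)
  rw [abs_le]
  constructor <;> linarith [log_nonneg one_le_two]

lemma abs_log_norm_one_sub_ofReal_mul_exp_le {r : ℝ} (hr : 1 / 2 ≤ r) (h1 : r ≤ 1) {θ : ℝ}
    (hθ : sin (θ / 2) ≠ 0) :
    |log ‖1 - (r : ℂ) * Complex.exp (θ * Complex.I)‖| ≤ 2 * log 2 - log |2 * sin (θ / 2)| := by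
  set A := ‖1 - (r : ℂ) * Complex.exp (θ * Complex.I)‖
  have hsq : A ^ 2 = (1 - r) ^ 2 + 4 * r * sin (θ / 2) ^ 2 := norm_one_sub_ofReal_mul_exp_sq r θ
  -- `A ^ 2 ≥ 4 r sin² ≥ 2 sin²`, hence `A ≥ |2 sin (θ / 2)| / 2`
  have hlow : |2 * sin (θ / 2)| / 2 ≤ A := by
    rw [abs_mul, abs_two, mul_div_cancel_left₀ _ two_ne_zero]
    refine abs_le_of_sq_le_sq ?_ (norm_nonneg _)
    rw [hsq]
    nlinarith [sq_nonneg (1 - r), sq_nonneg (sin (θ / 2))]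
  have hs : 0 < |2 * sin (θ / 2)| := by positivity
  have hdown : log |2 * sin (θ / 2)| - log 2 ≤ log A := by
    rw [← log_div hs.ne' two_ne_zero]
    exact log_le_log (by positivity) hlow
  have hup : log A ≤ log 2 :=
    log_norm_one_sub_ofReal_mul_le_log_two (by linarith) h1 (Complex.norm_exp_ofReal_mul_I θ)
  have hs2 : log |2 * sin (θ / 2)| ≤ log 2 := by
    refine log_le_log hs ?_
    rw [abs_mul, abs_two]
    linarith [abs_sin_le_one (θ / 2)]
  rw [abs_le]
  constructor <;> linarith [log_nonneg one_le_two]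

lemma tendsto_log_norm_one_sub_ofReal_mul_exp {θ : ℝ} (hθ : sin (θ / 2) ≠ 0) :
    Tendsto (fun r : ℝ ↦ log ‖1 - (r : ℂ) * Complex.exp (θ * Complex.I)‖) (𝓝 1)
      (𝓝 (log |2 * sin (θ / 2)|)) := by
  have hcont : Continuous fun r : ℝ ↦ ‖1 - (r : ℂ) * Complex.exp (θ * Complex.I)‖ := by fun_prop
  have h := hcont.tendsto 1
  rw [Complex.ofReal_one, one_mul, norm_one_sub_exp_ofReal_mul_I] at h
  exact h.log (by positivity)

lemma hasSum_log_norm_one_sub_ofReal_mul_exp {r : ℝ} (h0 : 0 ≤ r) (h1 : r < 1) (θ : ℝ) :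
    HasSum (fun n : ℕ+ ↦ -(r ^ (n : ℕ) / n * cos (n * θ)))
      (log ‖1 - (r : ℂ) * Complex.exp (θ * Complex.I)‖) := by
  set z : ℂ := r * Complex.exp (θ * Complex.I)
  have hz : ‖z‖ < 1 := by
    rwa [norm_mul, Complex.norm_exp_ofReal_mul_I, mul_one, Complex.norm_real, norm_of_nonneg h0]
  have hre : ∀ n : ℕ, (-(z ^ n / n)).re = -(r ^ n / n * cos (n * θ)) := by
    intro n
    rw [mul_pow, ← Complex.exp_nat_mul, ← mul_assoc, mul_div_right_comm, ← Complex.ofReal_pow,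
      ← Complex.ofReal_natCast, ← Complex.ofReal_div, ← Complex.ofReal_mul,
      Complex.neg_re, Complex.re_ofReal_mul, Complex.exp_ofReal_mul_I_re]
  have h := Complex.hasSum_re (Complex.hasSum_taylorSeries_neg_log hz).neg
  rw [neg_neg, Complex.log_re] at h
  simp only [hre] at h
  exact hasSum_pnat_iff (f := fun n : ℕ ↦ -(r ^ n / n * cos (n * θ))) |>.mpr (by simpa using h)

section WeightedIntegral

variable {α : Type*} [MeasurableSpace α] {μ : Measure α} {r : ℝ} {θ w : α → ℝ}

lemma integrable_log_norm_one_sub_ofReal_mul_exp_mul (h0 : 0 ≤ r) (h1 : r < 1)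
    (hθ : Measurable θ) (hw : Integrable w μ) :
    Integrable (fun a ↦ log ‖1 - (r : ℂ) * Complex.exp (θ a * Complex.I)‖ * w a) μ :=
  hw.bdd_mul (Measurable.aestronglyMeasurable (by fun_prop)) <| .of_forall fun a ↦
    abs_log_norm_one_sub_ofReal_mul_le h0 h1 (Complex.norm_exp_ofReal_mul_I _)

lemma integral_log_norm_one_sub_ofReal_mul_exp_mul (h0 : 0 ≤ r) (h1 : r < 1)
    (hθ : Measurable θ) (hw : Integrable w μ) :
    ∫ a, log ‖1 - (r : ℂ) * Complex.exp (θ a * Complex.I)‖ * w a ∂μ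
      = ∑' n : ℕ+, -(r ^ (n : ℕ) / n) * ∫ a, cos (n * θ a) * w a ∂μ := by
  have hint : ∀ n : ℕ+, Integrable (fun a ↦ cos (n * θ a) * w a) μ := fun n ↦
    hw.bdd_mul (c := 1) (by fun_prop) (.of_forall fun a ↦ by simpa using abs_cos_le_one _)
  have hnorm : ∀ n : ℕ+, ∫ a, ‖-(r ^ (n : ℕ) / n) * (cos (n * θ a) * w a)‖ ∂μ
      ≤ r ^ (n : ℕ) * ∫ a, ‖w a‖ ∂μ := by
    intro n
    rw [← integral_const_mul]
    refine integral_mono ((hint n).const_mul _).norm (hw.norm.const_mul _) fun a ↦ ?_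
    have hn : (1 : ℝ) ≤ n := Nat.one_le_cast.mpr n.pos
    simp only [norm_mul, norm_neg, norm_div, norm_pow, norm_of_nonneg h0, Real.norm_natCast]
    exact mul_le_mul (div_le_self (by positivity) hn)
      (mul_le_of_le_one_left (norm_nonneg _) (abs_cos_le_one _)) (by positivity) (by positivity)
  have hsum : Summable fun n : ℕ+ ↦ ∫ a, ‖-(r ^ (n : ℕ) / n) * (cos (n * θ a) * w a)‖ ∂μ :=
    .of_nonneg_of_le (fun n ↦ integral_nonneg fun a ↦ norm_nonneg _) hnorm
      (((summable_geometric_of_lt_one h0 h1).mul_right _).comp_injective PNat.coe_injective)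
  simp_rw [← integral_const_mul]
  rw [integral_tsum_of_summable_integral_norm (fun n ↦ (hint n).const_mul _) hsum]
  refine integral_congr_ae (.of_forall fun a ↦ ?_)
  dsimp only
  rw [← ((hasSum_log_norm_one_sub_ofReal_mul_exp h0 h1 (θ a)).mul_right (w a)).tsum_eq]
  exact tsum_congr fun n ↦ by ring

end WeightedIntegral

lemma integrableOn_Ioi_exp_neg_mul (x : ℝ) {b : ℝ} (hb : 0 < b) :
    IntegrableOn (fun v ↦ exp (-(b * v))) (Ioi x) := by
  simpa only [neg_mul] using exp_neg_integrableOn_Ioi x hb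

lemma integrableOn_Ioi_cos_mul_exp_neg_mul (x a : ℝ) {b : ℝ} (hb : 0 < b) :
    IntegrableOn (fun v ↦ cos (a * v) * exp (-(b * v))) (Ioi x) :=
  (integrableOn_Ioi_exp_neg_mul x hb).bdd_mul (c := 1) (by fun_prop)
    (.of_forall fun v ↦ by simpa using abs_cos_le_one _)

lemma integral_Ioi_cos_mul_exp_neg_mul (x a : ℝ) {b : ℝ} (hb : 0 < b) :
    ∫ v in Ioi x, cos (a * v) * exp (-(b * v)) =
      exp (-(b * x)) * (b * cos (a * x) - a * sin (a * x)) / (a ^ 2 + b ^ 2) := by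
  have hab : 0 < a ^ 2 + b ^ 2 := by positivity
  set F : ℝ → ℝ := fun v ↦ exp (-(b * v)) * (a * sin (a * v) - b * cos (a * v)) / (a ^ 2 + b ^ 2)
  have hderiv : ∀ v, HasDerivAt F (cos (a * v) * exp (-(b * v))) v := by
    intro v
    have hlin : ∀ c : ℝ, HasDerivAt (fun v ↦ c * v) c v := fun c ↦ by
      simpa using (hasDerivAt_id v).const_mul c
    have hsc := ((hlin a).sin.const_mul a).fun_sub ((hlin a).cos.const_mul b)
    have h := ((hlin (-b)).exp.fun_mul hsc).div_const (a ^ 2 + b ^ 2)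
    simp only [neg_mul] at h
    refine h.congr_deriv ?_
    field_simp
    ring
  have hbound : ∀ v, ‖F v‖ ≤ exp (-(b * v)) * ((|a| + |b|) / (a ^ 2 + b ^ 2)) := by
    intro v
    rw [norm_div, norm_mul, norm_of_nonneg (exp_nonneg _), norm_of_nonneg hab.le, mul_div_assoc]
    gcongr
    refine (norm_sub_le _ _).trans (add_le_add ?_ ?_) <;> rw [norm_mul, Real.norm_eq_abs]
    · exact mul_le_of_le_one_right (abs_nonneg _) (abs_sin_le_one _)
    · exact mul_le_of_le_one_right (abs_nonneg _) (abs_cos_le_one _)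
  have hlim : Tendsto F atTop (𝓝 0) := by
    refine squeeze_zero_norm hbound ?_
    simpa using (tendsto_exp_neg_atTop_nhds_zero.comp (tendsto_id.const_mul_atTop hb)).mul_const
      ((|a| + |b|) / (a ^ 2 + b ^ 2))
  rw [integral_Ioi_of_hasDerivAt_of_tendsto' (fun v _ ↦ hderiv v)
    (integrableOn_Ioi_cos_mul_exp_neg_mul x a hb) hlim]
  simp only [F]
  ring

noncomputable def ramanujanCoeff (x κ n : ℝ) : ℝ :=
  2 * π * exp (-(2 * π * κ * x)) *
    (κ ^ 2 * (sin (2 * π * n * x) / (κ ^ 2 + n ^ 2))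
      - κ ^ 3 * (cos (2 * π * n * x) / (n * (κ ^ 2 + n ^ 2))))

lemma integral_Ioi_cos_mul_sq_mul_exp_neg_mul (x : ℝ) {κ n : ℝ} (hκ : 0 < κ) (hn : n ≠ 0) :
    ∫ v in Ioi x, cos (n * (2 * π * v)) * ((2 * π * κ) ^ 2 * exp (-(2 * π * κ * v)))
      = -(n * ramanujanCoeff x κ n) := by
  have hb : 0 < 2 * π * κ := by positivity
  simp_rw [mul_left_comm (cos _), ← mul_assoc n]
  rw [integral_const_mul, integral_Ioi_cos_mul_exp_neg_mul x _ hb, ramanujanCoeff]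
  field_simp
  ring

lemma summable_pnat_of_abs_le_one_div_sq {f : ℕ+ → ℝ} (hf : ∀ n : ℕ+, |f n| ≤ 1 / (n : ℝ) ^ 2) :
    Summable f :=
  .of_norm_bounded ((Real.summable_one_div_nat_pow.mpr one_lt_two).comp_injective
    PNat.coe_injective) hf

lemma summable_div_sq_add_sq {f : ℕ+ → ℝ} (hf : ∀ n, |f n| ≤ 1) (κ : ℝ) :
    Summable fun n : ℕ+ ↦ f n / (κ ^ 2 + (n : ℝ) ^ 2) := by
  refine summable_pnat_of_abs_le_one_div_sq fun n ↦ ?_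
  have hn : (0 : ℝ) < n := by positivity
  rw [abs_div, abs_of_pos (by positivity : 0 < κ ^ 2 + (n : ℝ) ^ 2)]
  exact div_le_div₀ zero_le_one (hf n) (by positivity) (by nlinarith)

lemma summable_div_mul_sq_add_sq {f : ℕ+ → ℝ} (hf : ∀ n, |f n| ≤ 1) (κ : ℝ) :
    Summable fun n : ℕ+ ↦ f n / (n * (κ ^ 2 + (n : ℝ) ^ 2)) := by
  refine summable_pnat_of_abs_le_one_div_sq fun n ↦ ?_
  have hn : (1 : ℝ) ≤ n := Nat.one_le_cast.mpr n.pos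
  rw [abs_div, abs_of_pos (by positivity : 0 < (n : ℝ) * (κ ^ 2 + (n : ℝ) ^ 2))]
  exact div_le_div₀ zero_le_one (hf n) (by positivity) (by nlinarith)

lemma summable_ramanujanCoeff (x κ : ℝ) : Summable fun n : ℕ+ ↦ ramanujanCoeff x κ n :=
  (((summable_div_sq_add_sq (fun n ↦ abs_sin_le_one (2 * π * n * x)) κ).mul_left _).sub
    ((summable_div_mul_sq_add_sq (fun n ↦ abs_cos_le_one (2 * π * n * x)) κ).mul_left _)).mul_left _

lemma tsum_ramanujanCoeff (x κ : ℝ) :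
    ∑' n : ℕ+, ramanujanCoeff x κ n = 2 * π * exp (-(2 * π * κ * x)) *
      (κ ^ 2 * ∑' n : ℕ+, sin (2 * π * n * x) / (κ ^ 2 + (n : ℝ) ^ 2)
        - κ ^ 3 * ∑' n : ℕ+, cos (2 * π * n * x) / (n * (κ ^ 2 + (n : ℝ) ^ 2))) := by
  have hsin := summable_div_sq_add_sq (fun n ↦ abs_sin_le_one (2 * π * n * x)) κ
  have hcos := summable_div_mul_sq_add_sq (fun n ↦ abs_cos_le_one (2 * π * n * x)) κ
  rw [← tsum_mul_left, ← tsum_mul_left, ← (hsin.mul_left _).tsum_sub (hcos.mul_left _),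
    ← tsum_mul_left]
  rfl

lemma tendsto_tsum_pow_mul_of_summable {f : ℕ+ → ℝ} (hf : Summable f) :
    Tendsto (fun r : ℝ ↦ ∑' n : ℕ+, r ^ (n : ℕ) * f n) (𝓝[<] 1) (𝓝 (∑' n : ℕ+, f n)) := by
  refine tendsto_tsum_of_dominated_convergence hf.norm (fun n ↦ ?_) ?_
  · simpa using ((continuous_pow (n : ℕ)).tendsto' 1 1 (one_pow _)).mono_left nhdsWithin_le_nhds
      |>.mul_const (f n)
  · filter_upwards [Ioo_mem_nhdsLT zero_lt_one] with r hr n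
    rw [norm_mul, norm_pow, norm_of_nonneg hr.1.le]
    exact mul_le_of_le_one_left (norm_nonneg _) (pow_le_one₀ hr.1.le hr.2.le)

lemma integrable_of_tendsto_of_nonneg {α ι : Type*} [MeasurableSpace α] {μ : Measure α}
    {l : Filter ι} [l.NeBot] [l.IsCountablyGenerated] {f : ι → α → ℝ} {g : α → ℝ}
    (hmeas : ∀ i, AEStronglyMeasurable (f i) μ) (hint : ∀ᶠ i in l, Integrable (f i) μ)
    (hnonneg : ∀ᶠ i in l, 0 ≤ᵐ[μ] f i)
    (hbdd : IsBoundedUnder (· ≤ ·) l fun i ↦ ∫ a, f i a ∂μ)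
    (hlim : ∀ᵐ a ∂μ, Tendsto (f · a) l (𝓝 (g a))) :
    Integrable g μ := by
  obtain ⟨C, hC⟩ := hbdd
  rw [eventually_map] at hC
  have hnorm : ∀ᶠ i in l, eLpNorm (f i) 1 μ ≤ ENNReal.ofReal C := by
    filter_upwards [hint, hnonneg, hC] with i hi hi0 hiC
    rw [eLpNorm_one_eq_lintegral_enorm, ← ofReal_integral_norm_eq_lintegral_enorm hi,
      integral_congr_ae (hi0.mono fun a ha ↦ norm_of_nonneg ha)]
    exact ENNReal.ofReal_le_ofReal hiC
  exact memLp_one_iff_integrable.mp ⟨aestronglyMeasurable_of_tendsto_ae l hmeas hlim,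
    (Lp.eLpNorm_le_of_ae_tendsto hnorm hmeas hlim).trans_lt ENNReal.ofReal_lt_top⟩

lemma ae_sin_pi_mul_ne_zero : ∀ᵐ v : ℝ, sin (π * v) ≠ 0 := by
  refine measure_mono_null (fun v hv ↦ ?_) ((countable_range ((↑) : ℤ → ℝ)).measure_zero volume)
  obtain ⟨n, hn⟩ := sin_eq_zero_iff.mp (not_not.mp hv)
  exact ⟨n, mul_left_cancel₀ pi_ne_zero (by linarith)⟩

lemma tendsto_log_norm_one_sub_mul_exp_two_pi {v : ℝ} (hv : sin (π * v) ≠ 0) :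
    Tendsto (fun r : ℝ ↦ log ‖1 - (r : ℂ) * Complex.exp (↑(2 * π * v) * Complex.I)‖) (𝓝[<] 1)
      (𝓝 (log |2 * sin (π * v)|)) := by
  have hθ : 2 * π * v / 2 = π * v := by ring
  have h := tendsto_log_norm_one_sub_ofReal_mul_exp (θ := 2 * π * v) (by rwa [hθ])
  rw [hθ] at h
  exact h.mono_left nhdsWithin_le_nhds

lemma abs_log_norm_one_sub_mul_exp_two_pi_le {r : ℝ} (hr : 1 / 2 ≤ r) (h1 : r ≤ 1) {v : ℝ}
    (hv : sin (π * v) ≠ 0) :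
    |log ‖1 - (r : ℂ) * Complex.exp (↑(2 * π * v) * Complex.I)‖|
      ≤ 2 * log 2 - log |2 * sin (π * v)| := by
  have hθ : 2 * π * v / 2 = π * v := by ring
  have h := abs_log_norm_one_sub_ofReal_mul_exp_le hr h1 (θ := 2 * π * v) (by rwa [hθ])
  rwa [hθ] at h

lemma integral_Ioi_log_norm_one_sub_mul_weight (x : ℝ) {κ r : ℝ} (hκ : 0 < κ) (h0 : 0 ≤ r)
    (h1 : r < 1) :
    ∫ v in Ioi x, log ‖1 - (r : ℂ) * Complex.exp (↑(2 * π * v) * Complex.I)‖ *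
      ((2 * π * κ) ^ 2 * exp (-(2 * π * κ * v)))
      = ∑' n : ℕ+, r ^ (n : ℕ) * ramanujanCoeff x κ n := by
  rw [integral_log_norm_one_sub_ofReal_mul_exp_mul (θ := fun v ↦ 2 * π * v) h0 h1 (by fun_prop)
    ((integrableOn_Ioi_exp_neg_mul x (by positivity)).const_mul _)]
  refine tsum_congr fun n ↦ ?_
  rw [integral_Ioi_cos_mul_sq_mul_exp_neg_mul x hκ (by positivity)]
  field_simp

lemma integrableOn_Ioi_log_abs_two_sin_mul_weight (x : ℝ) {κ : ℝ} (hκ : 0 < κ) :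
    IntegrableOn (fun v ↦ log |2 * sin (π * v)| * ((2 * π * κ) ^ 2 * exp (-(2 * π * κ * v))))
      (Ioi x) := by
  set w : ℝ → ℝ := fun v ↦ (2 * π * κ) ^ 2 * exp (-(2 * π * κ * v))
  set L : ℝ → ℝ → ℝ := fun r v ↦ log ‖1 - (r : ℂ) * Complex.exp (↑(2 * π * v) * Complex.I)‖
  have hw : IntegrableOn w (Ioi x) := (integrableOn_Ioi_exp_neg_mul x (by positivity)).const_mul _
  have hr : ∀ᶠ r in 𝓝[<] (1 : ℝ), r ∈ Ioo 0 1 := Ioo_mem_nhdsLT zero_lt_one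
  have hlim : IntegrableOn (fun v ↦ log 2 * w v - log |2 * sin (π * v)| * w v) (Ioi x) := by
    refine integrable_of_tendsto_of_nonneg (l := 𝓝[<] 1) (f := fun r v ↦ log 2 * w v - L r v * w v)
      (fun r ↦ Measurable.aestronglyMeasurable (by fun_prop)) ?_ ?_ ?_ ?_
    · filter_upwards [hr] with r hr
      exact (hw.const_mul _).sub (integrable_log_norm_one_sub_ofReal_mul_exp_mul hr.1.le hr.2
        (by fun_prop) hw)
    · filter_upwards [hr] with r hr
      refine .of_forall fun v ↦ sub_nonneg.mpr (mul_le_mul_of_nonneg_right ?_ (by positivity))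
      exact log_norm_one_sub_ofReal_mul_le_log_two hr.1.le hr.2.le (Complex.norm_exp_ofReal_mul_I _)
    · refine (((tendsto_tsum_pow_mul_of_summable (summable_ramanujanCoeff x κ)).const_sub
        (log 2 * ∫ v in Ioi x, w v)).congr' ?_).isBoundedUnder_le
      filter_upwards [hr] with r hr
      rw [integral_sub (hw.const_mul _) (integrable_log_norm_one_sub_ofReal_mul_exp_mul hr.1.le hr.2
        (by fun_prop) hw), integral_const_mul (log 2),
        integral_Ioi_log_norm_one_sub_mul_weight x hκ hr.1.le hr.2]
    · filter_upwards [ae_restrict_of_ae ae_sin_pi_mul_ne_zero] with v hv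
      exact tendsto_const_nhds.sub ((tendsto_log_norm_one_sub_mul_exp_two_pi hv).mul_const _)
  refine ((hw.const_mul (log 2)).sub hlim).congr (.of_forall fun v ↦ ?_)
  simp only [Pi.sub_apply]
  ring

lemma tendsto_integral_Ioi_log_norm_one_sub_mul_weight (x : ℝ) {κ : ℝ} (hκ : 0 < κ) :
    Tendsto (fun r : ℝ ↦ ∫ v in Ioi x, log ‖1 - (r : ℂ) * Complex.exp (↑(2 * π * v) * Complex.I)‖ *
      ((2 * π * κ) ^ 2 * exp (-(2 * π * κ * v)))) (𝓝[<] 1)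
      (𝓝 (∫ v in Ioi x, log |2 * sin (π * v)| * ((2 * π * κ) ^ 2 * exp (-(2 * π * κ * v))))) := by
  set w : ℝ → ℝ := fun v ↦ (2 * π * κ) ^ 2 * exp (-(2 * π * κ * v))
  have hw : IntegrableOn w (Ioi x) := (integrableOn_Ioi_exp_neg_mul x (by positivity)).const_mul _
  have hw0 : ∀ v, 0 ≤ w v := fun v ↦ by positivity
  refine tendsto_integral_filter_of_dominated_convergence
    (fun v ↦ 2 * log 2 * w v - log |2 * sin (π * v)| * w v)
    (.of_forall fun r ↦ Measurable.aestronglyMeasurable (by fun_prop)) ?_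
    ((hw.const_mul _).sub (integrableOn_Ioi_log_abs_two_sin_mul_weight x hκ)) ?_
  · filter_upwards [Ioo_mem_nhdsLT (by norm_num : (1 : ℝ) / 2 < 1)] with r hr
    filter_upwards [ae_restrict_of_ae ae_sin_pi_mul_ne_zero] with v hv
    rw [norm_mul, norm_of_nonneg (hw0 v), Real.norm_eq_abs, ← sub_mul]
    exact mul_le_mul_of_nonneg_right (abs_log_norm_one_sub_mul_exp_two_pi_le hr.1.le hr.2.le hv)
      (hw0 v)
  · filter_upwards [ae_restrict_of_ae ae_sin_pi_mul_ne_zero] with v hv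
    exact (tendsto_log_norm_one_sub_mul_exp_two_pi hv).mul_const _

lemma integral_Ioi_log_abs_two_sin_mul_weight (x : ℝ) {κ : ℝ} (hκ : 0 < κ) :
    ∫ v in Ioi x, log |2 * sin (π * v)| * ((2 * π * κ) ^ 2 * exp (-(2 * π * κ * v)))
      = ∑' n : ℕ+, ramanujanCoeff x κ n := by
  refine tendsto_nhds_unique (tendsto_integral_Ioi_log_norm_one_sub_mul_weight x hκ)
    ((tendsto_tsum_pow_mul_of_summable (summable_ramanujanCoeff x κ)).congr' ?_)
  filter_upwards [Ioo_mem_nhdsLT zero_lt_one] with r hr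
  exact (integral_Ioi_log_norm_one_sub_mul_weight x hκ hr.1.le hr.2).symm

theorem ramanujan_integral_identity_general (x : ℝ) (k : ℕ+) :
    (∫ v in Set.Ioi x, Real.log |2 * Real.sin (π * v)| * (2 * π * k) ^ 2 * Real.exp (-(2 * π * k * v)))
      = 2 * π * Real.exp (-(2 * π * k * x)) *
          ((k : ℝ) ^ 2 * (∑' n : ℕ+, Real.sin (2 * π * n * x) / ((k : ℝ) ^ 2 + (n : ℝ) ^ 2))
            - (k : ℝ) ^ 3 * ∑' n : ℕ+, Real.cos (2 * π * n * x) / ((n : ℝ) * ((k : ℝ) ^ 2 + (n : ℝ) ^ 2))) := by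
  rw [← tsum_ramanujanCoeff, ← integral_Ioi_log_abs_two_sin_mul_weight x (by positivity)]
  exact integral_congr_ae (.of_forall fun v ↦ mul_assoc _ _ _)

theorem ramanujan_integral_identity (x : ℝ) (hx : 0 < x) (k : ℕ+) :
    (∫ v in Set.Ioi x, Real.log |2 * Real.sin (π * v)| * (2 * π * k) ^ 2 * Real.exp (-(2 * π * k * v)))
      = 2 * π * Real.exp (-(2 * π * k * x)) *
          ((k : ℝ) ^ 2 * (∑' n : ℕ+, Real.sin (2 * π * n * x) / ((k : ℝ) ^ 2 + (n : ℝ) ^ 2))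
            - (k : ℝ) ^ 3 * ∑' n : ℕ+, Real.cos (2 * π * n * x) / ((n : ℝ) * ((k : ℝ) ^ 2 + (n : ℝ) ^ 2))) :=
  ramanujan_integral_identity_general x k
end

section
/- As x → +∞ along x = N + 1/2 with N a positive integer, Σ_{k≥1} log|x⁴−k⁴|/sinh²(πk) = 4·log x·Σ_{k≥1} 1/sinh²(πk) + O(x^{−2}). -/
/-!
With `x = N + 1/2`, every integer `k` lies at distance at least `1/2` from `x`, so
`|x⁴ - k⁴| = |x - k| (x + k) (x² + k²) ≥ x³/2`. Comparing logarithms of two numbers that are both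
at least `x³/2` then gives `|log |x⁴ - k⁴| - 4 log x| ≤ 2 k⁴ / x³`. Since `sinh (π k) ≥ e^{π k} / 4`,
the series `∑ k⁴ / sinh² (π k)` converges, and the error is at most `2 x⁻³` times its sum.
-/

open Real Filter Asymptotics

namespace Real

lemma exp_le_four_mul_sinh {y : ℝ} (hy : 1 ≤ y) : exp y ≤ 4 * sinh y := by
  have h2 : 2 ≤ exp y := by linarith [add_one_le_exp y]
  have h1 : exp (-y) ≤ 1 := exp_le_one_iff.mpr (by linarith)
  rw [sinh_eq]
  linarith

lemma summable_pow_div_sinh_sq {a : ℝ} (ha : 0 < a) (m : ℕ) :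
    Summable fun n : ℕ => (n : ℝ) ^ m / sinh (a * n) ^ 2 := by
  have hr : ‖exp (-2 * a)‖ < 1 := by
    rw [norm_of_nonneg (exp_pos _).le, exp_lt_one_iff]; linarith
  refine .of_norm_bounded_eventually_nat
    ((summable_pow_mul_geometric_of_norm_lt_one m hr).mul_left 16) ?_
  filter_upwards [eventually_ge_atTop ⌈a⁻¹⌉₊] with n hn
  have hy : 1 ≤ a * n := by
    rw [← inv_mul_le_iff₀ ha, mul_one]; exact Nat.ceil_le.mp hn
  have hexp : exp (-2 * a) ^ n = (exp (a * n) ^ 2)⁻¹ := by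
    rw [← exp_nat_mul, ← exp_nat_mul, ← exp_neg]; ring_nf
  have hsinh := exp_le_four_mul_sinh hy
  rw [norm_of_nonneg (by positivity), hexp]
  calc (n : ℝ) ^ m / sinh (a * n) ^ 2 ≤ (n : ℝ) ^ m / (exp (a * n) / 4) ^ 2 := by
        gcongr; linarith
    _ = 16 * ((n : ℝ) ^ m * (exp (a * n) ^ 2)⁻¹) := by ring

lemma abs_log_sub_log_le {a b m : ℝ} (hm : 0 < m) (hma : m ≤ a) (hmb : m ≤ b) :
    |log a - log b| ≤ |a - b| / m := by
  wlog hba : b ≤ a generalizing a b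
  · rw [abs_sub_comm, abs_sub_comm a]; exact this hmb hma (by linarith)
  have hb : 0 < b := hm.trans_le hmb
  have ha : 0 < a := hb.trans_le hba
  rw [← log_div ha.ne' hb.ne', abs_of_nonneg (log_nonneg ((one_le_div hb).mpr hba)),
    abs_of_nonneg (by linarith)]
  calc log (a / b) ≤ a / b - 1 := log_le_sub_one_of_pos (by positivity)
    _ = (a - b) / b := by field_simp
    _ ≤ (a - b) / m := by gcongr

end Real

lemma half_le_abs_add_half_sub_natCast (N k : ℕ) : 1 / 2 ≤ |(N + 1 / 2 : ℝ) - k| := by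
  rcases le_or_gt k N with h | h
  · have : (k : ℝ) ≤ N := by exact_mod_cast h
    rw [abs_of_pos (by linarith)]; linarith
  · have : (N : ℝ) + 1 ≤ k := by exact_mod_cast h
    rw [abs_of_neg (by linarith)]; linarith

lemma mul_pow_three_le_abs_pow_four_sub {x k δ : ℝ} (hx : 0 ≤ x) (hk : 0 ≤ k)
    (hxk : δ ≤ |x - k|) : δ * x ^ 3 ≤ |x ^ 4 - k ^ 4| := by
  have hfactor : x ^ 4 - k ^ 4 = (x - k) * ((x + k) * (x ^ 2 + k ^ 2)) := by ring
  rw [hfactor, abs_mul, abs_of_nonneg (by positivity : 0 ≤ (x + k) * (x ^ 2 + k ^ 2))]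
  calc δ * x ^ 3 ≤ |x - k| * x ^ 3 := by gcongr
    _ ≤ |x - k| * ((x + k) * (x ^ 2 + k ^ 2)) := by
        gcongr; nlinarith [sq_nonneg k, pow_nonneg hx 3]

lemma abs_log_abs_pow_four_sub_sub_le {x k δ : ℝ} (hδ : 0 < δ) (hδx : δ ≤ x) (hk : 0 ≤ k)
    (hxk : δ ≤ |x - k|) : |log |x ^ 4 - k ^ 4| - 4 * log x| ≤ k ^ 4 / (δ * x ^ 3) := by
  have hx : 0 < x := hδ.trans_le hδx
  have hgap := mul_pow_three_le_abs_pow_four_sub hx.le hk hxk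
  have hx4 : δ * x ^ 3 ≤ x ^ 4 := by rw [pow_succ' x 3]; gcongr
  have hdist : |(|x ^ 4 - k ^ 4| - x ^ 4)| ≤ k ^ 4 := by
    have := abs_abs_sub_abs_le_abs_sub (x ^ 4 - k ^ 4) (x ^ 4)
    rwa [abs_of_pos (by positivity : 0 < x ^ 4), sub_sub_cancel_left, abs_neg,
      abs_of_nonneg (by positivity : 0 ≤ k ^ 4)] at this
  calc |log |x ^ 4 - k ^ 4| - 4 * log x| = |log |x ^ 4 - k ^ 4| - log (x ^ 4)| := by
        rw [log_pow]; norm_num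
    _ ≤ |(|x ^ 4 - k ^ 4| - x ^ 4)| / (δ * x ^ 3) := abs_log_sub_log_le (by positivity) hgap hx4
    _ ≤ k ^ 4 / (δ * x ^ 3) := by gcongr

lemma abs_tsum_div_sub_mul_tsum_le {ι : Type*} {f d g : ι → ℝ} {c : ℝ}
    (hd : Summable fun i => 1 / d i) (hg : Summable g) (h : ∀ i, |(f i - c) / d i| ≤ g i) :
    |∑' i, f i / d i - c * ∑' i, 1 / d i| ≤ ∑' i, g i := by
  have hsub : Summable fun i => (f i - c) / d i := .of_norm_bounded hg h
  have hsplit : (fun i => f i / d i) = fun i => (f i - c) / d i + c * (1 / d i) := by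
    ext i; ring
  rw [hsplit, hsub.tsum_add (hd.mul_left c), tsum_mul_left, add_sub_cancel_right]
  exact tsum_of_norm_bounded (f := fun i => (f i - c) / d i) hg.hasSum h

theorem ramanujan_log_sum_asymptotic :
    (fun N : ℕ =>
        (∑' k : ℕ+, Real.log |((N : ℝ) + 1 / 2) ^ 4 - (k : ℝ) ^ 4| / Real.sinh (π * k) ^ 2)
          - 4 * Real.log ((N : ℝ) + 1 / 2) * ∑' k : ℕ+, 1 / Real.sinh (π * k) ^ 2)
      =O[atTop] (fun N : ℕ => ((N : ℝ) + 1 / 2) ^ (-2 : ℤ)) := by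
  have hsummable (m : ℕ) : Summable fun k : ℕ+ => (k : ℝ) ^ m / sinh (π * k) ^ 2 :=
    (summable_pow_div_sinh_sq pi_pos m).comp_injective PNat.coe_injective
  set C := ∑' k : ℕ+, (k : ℝ) ^ 4 / sinh (π * k) ^ 2
  have hC : 0 ≤ C := tsum_nonneg fun k => by positivity
  refine .of_bound (4 * C) (.of_forall fun N => ?_)
  set x : ℝ := N + 1 / 2
  have hx : 1 / 2 ≤ x := by simp [x]
  have hbound := abs_tsum_div_sub_mul_tsum_le (f := fun k : ℕ+ => log |x ^ 4 - (k : ℝ) ^ 4|)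
    (c := 4 * log x) (by simpa using hsummable 0) ((hsummable 4).mul_left (2 / x ^ 3)) fun k => by
      rw [abs_div, abs_of_nonneg (sq_nonneg (sinh (π * k)))]
      calc _ ≤ (k : ℝ) ^ 4 / (1 / 2 * x ^ 3) / sinh (π * k) ^ 2 := by
            gcongr
            exact abs_log_abs_pow_four_sub_sub_le (by norm_num) hx (by positivity)
              (half_le_abs_add_half_sub_natCast N k)
        _ = 2 / x ^ 3 * ((k : ℝ) ^ 4 / sinh (π * k) ^ 2) := by field_simp
  have hdecay : 2 / x ^ 3 ≤ 4 * x ^ (-2 : ℤ) := by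
    rw [zpow_neg, zpow_ofNat, div_le_iff₀ (by positivity)]
    field_simp
    linarith
  rw [tsum_mul_left] at hbound
  rw [norm_eq_abs, norm_of_nonneg (by positivity)]
  linarith [mul_le_mul_of_nonneg_right hdecay hC]
end
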